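/- arXiv:2504.04069 — 3 statements merged into one kernel-verified Lean document; each statement's English description precedes it below -/
import Mathlib

section
/- Let A ∈ ℝ^{m×n} be nonzero with m ≥ n, let P ⊆ ℝ^m and Q ⊆ ℝ^n be closed convex cones containing nonzero vectors, and let U, V be matrices with orthonormal columns such that A/‖A‖ = Uᵀ V. Then a pair (u*,v*) is an optimal solution of SV(A,P,Q) if and only if (Uu*, Vv*) is an optimal solution of MA(UP, VQ), where UP = {Uu : u ∈ P} and VQ = {Vv : v ∈ Q}. -/
open Matrix

/-- Euclidean norm of a vector in `ℝ^n`. -/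
noncomputable def vnorm {n : ℕ} (v : Fin n → ℝ) : ℝ := Real.sqrt (v ⬝ᵥ v)

/-- Spectral norm of a real matrix: the largest value of `‖Av‖` over the unit ball. -/
noncomputable def specNorm {m n : ℕ} (A : Matrix (Fin m) (Fin n) ℝ) : ℝ :=
  sSup {r : ℝ | ∃ v : Fin n → ℝ, vnorm v ≤ 1 ∧ r = vnorm (A.mulVec v)}

/-- `(u,v)` is an optimal solution of the problem `SV(A,P,Q)`:
minimize `⟨u, Av⟩` over unit vectors `u ∈ P`, `v ∈ Q`. -/
def IsOptSV {m n : ℕ} (A : Matrix (Fin m) (Fin n) ℝ) (P : Set (Fin m → ℝ))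
    (Q : Set (Fin n → ℝ)) (u : Fin m → ℝ) (v : Fin n → ℝ) : Prop :=
  u ∈ P ∧ vnorm u = 1 ∧ v ∈ Q ∧ vnorm v = 1 ∧
    ∀ u' ∈ P, ∀ v' ∈ Q, vnorm u' = 1 → vnorm v' = 1 →
      u ⬝ᵥ A.mulVec v ≤ u' ⬝ᵥ A.mulVec v'

lemma dotProduct_self_nonneg' {n : ℕ} (v : Fin n → ℝ) : 0 ≤ v ⬝ᵥ v :=
  Finset.sum_nonneg fun i _ => mul_self_nonneg _

lemma vnorm_nonneg' {n : ℕ} (v : Fin n → ℝ) : 0 ≤ vnorm v := Real.sqrt_nonneg _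

lemma vnorm_sq' {n : ℕ} (v : Fin n → ℝ) : vnorm v ^ 2 = v ⬝ᵥ v :=
  Real.sq_sqrt (dotProduct_self_nonneg' v)

lemma specNorm_pos {m n : ℕ} (A : Matrix (Fin m) (Fin n) ℝ) (hA : A ≠ 0) :
    0 < specNorm A := by
  obtain ⟨i, j, hij⟩ : ∃ i j, A i j ≠ 0 := by
    by_contra h
    push_neg at h
    exact hA (Matrix.ext fun i j => by rw [h i j, Matrix.zero_apply])
  set S : Set ℝ := {r : ℝ | ∃ v : Fin n → ℝ, vnorm v ≤ 1 ∧ r = vnorm (A.mulVec v)}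
  have hbdd : BddAbove S := by
    refine ⟨Real.sqrt (∑ a, ∑ b, A a b ^ 2), ?_⟩
    rintro r ⟨v, hv, rfl⟩
    have hvv : v ⬝ᵥ v ≤ 1 := by
      have := vnorm_sq' v
      nlinarith [vnorm_nonneg' v]
    unfold vnorm
    apply Real.sqrt_le_sqrt
    have hterm : ∀ a : Fin m, (A.mulVec v) a * (A.mulVec v) a ≤ ∑ b, A a b ^ 2 := by
      intro a
      have h1 : (∑ b, A a b * v b) ^ 2 ≤ (∑ b, A a b ^ 2) * ∑ b, v b ^ 2 :=
        Finset.sum_mul_sq_le_sq_mul_sq _ _ _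
      have h2 : (∑ b, v b ^ 2) ≤ 1 := by
        have : (∑ b, v b ^ 2) = v ⬝ᵥ v := by simp [dotProduct, sq]
        linarith
      have h3 : (0:ℝ) ≤ ∑ b, A a b ^ 2 := Finset.sum_nonneg fun _ _ => sq_nonneg _
      have : (A.mulVec v) a * (A.mulVec v) a = (∑ b, A a b * v b) ^ 2 := by
        simp [Matrix.mulVec, dotProduct, sq]
      nlinarith
    calc (A.mulVec v) ⬝ᵥ (A.mulVec v) = ∑ a, (A.mulVec v) a * (A.mulVec v) a := rfl
      _ ≤ ∑ a, ∑ b, A a b ^ 2 := Finset.sum_le_sum fun a _ => hterm a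
  have hmem : vnorm (A.mulVec (Pi.single j 1)) ∈ S := by
    refine ⟨Pi.single j 1, le_of_eq ?_, rfl⟩
    unfold vnorm
    have : (Pi.single j (1:ℝ)) ⬝ᵥ (Pi.single j 1) = 1 := by
      simp [dotProduct, Pi.single_apply]
    rw [this, Real.sqrt_one]
  have hlow : |A i j| ≤ vnorm (A.mulVec (Pi.single j 1)) := by
    have hv : (A.mulVec (Pi.single j 1)) i = A i j := by
      simp [Matrix.mulVec, dotProduct, Pi.single_apply]
    unfold vnorm
    set w := A.mulVec (Pi.single j 1) with hw
    have h1 : A i j * A i j ≤ w ⬝ᵥ w := by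
      have h2 : w i * w i ≤ ∑ a, w a * w a :=
        Finset.single_le_sum (f := fun a => w a * w a)
          (fun a _ => mul_self_nonneg _) (Finset.mem_univ i)
      rw [hv] at h2
      exact h2
    calc |A i j| = Real.sqrt ((A i j) ^ 2) := (Real.sqrt_sq_eq_abs _).symm
      _ ≤ _ := Real.sqrt_le_sqrt (by rw [sq]; exact h1)
  have : |A i j| ≤ specNorm A := le_trans hlow (le_csSup hbdd hmem)
  have hpos : 0 < |A i j| := abs_pos.2 hij
  linarith

lemma key_dot {m n d : ℕ} (U : Matrix (Fin d) (Fin m) ℝ) (V : Matrix (Fin d) (Fin n) ℝ)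
    (u : Fin m → ℝ) (v : Fin n → ℝ) :
    (U.mulVec u) ⬝ᵥ (V.mulVec v) = u ⬝ᵥ (Uᵀ * V).mulVec v := by
  rw [← Matrix.mulVec_mulVec, Matrix.dotProduct_mulVec u Uᵀ, Matrix.vecMul_transpose]

lemma vnorm_mulVec {m d : ℕ} (U : Matrix (Fin d) (Fin m) ℝ) (hU : Uᵀ * U = 1)
    (u : Fin m → ℝ) : vnorm (U.mulVec u) = vnorm u := by
  unfold vnorm
  rw [key_dot U U u u, hU, Matrix.one_mulVec]

lemma mulVec_inj' {m d : ℕ} (U : Matrix (Fin d) (Fin m) ℝ) (hU : Uᵀ * U = 1)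
    {u u' : Fin m → ℝ} (h : U.mulVec u = U.mulVec u') : u = u' := by
  have := congrArg (Uᵀ.mulVec ·) h
  simpa [Matrix.mulVec_mulVec, hU, Matrix.one_mulVec] using this

/-- If `A ≠ 0`, `m ≥ n`, `P`, `Q` are closed convex cones containing nonzero vectors, and
`A/‖A‖ = Uᵀ V` with `U`, `V` having orthonormal columns, then `(u*,v*)` solves `SV(A,P,Q)`
iff `(Uu*, Vv*)` solves `MA(UP, VQ) = SV(I, UP, VQ)`. -/
theorem stmt2 {m n d : ℕ} (hmn : n ≤ m) (A : Matrix (Fin m) (Fin n) ℝ) (hA : A ≠ 0)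
    (P : Set (Fin m → ℝ)) (Q : Set (Fin n → ℝ))
    (hPclosed : IsClosed P) (hPconvex : Convex ℝ P)
    (hPcone : ∀ c : ℝ, 0 ≤ c → ∀ x ∈ P, c • x ∈ P) (hPne : ∃ x ∈ P, x ≠ 0)
    (hQclosed : IsClosed Q) (hQconvex : Convex ℝ Q)
    (hQcone : ∀ c : ℝ, 0 ≤ c → ∀ y ∈ Q, c • y ∈ Q) (hQne : ∃ y ∈ Q, y ≠ 0)
    (U : Matrix (Fin d) (Fin m) ℝ) (V : Matrix (Fin d) (Fin n) ℝ)
    (hU : Uᵀ * U = 1) (hV : Vᵀ * V = 1)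
    (hUV : (specNorm A)⁻¹ • A = Uᵀ * V)
    (ustar : Fin m → ℝ) (vstar : Fin n → ℝ) :
    IsOptSV A P Q ustar vstar ↔
      IsOptSV (1 : Matrix (Fin d) (Fin d) ℝ)
        {x | ∃ u ∈ P, x = U.mulVec u} {y | ∃ v ∈ Q, y = V.mulVec v}
        (U.mulVec ustar) (V.mulVec vstar) := by
  have hc : 0 < (specNorm A)⁻¹ := inv_pos.2 (specNorm_pos A hA)
  have key : ∀ (u : Fin m → ℝ) (v : Fin n → ℝ),
      (U.mulVec u) ⬝ᵥ (V.mulVec v) = (specNorm A)⁻¹ * (u ⬝ᵥ A.mulVec v) := by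
    intro u v
    rw [key_dot U V u v, ← hUV, Matrix.smul_mulVec, dotProduct_smul, smul_eq_mul]
  constructor
  · rintro ⟨hu, hnu, hv, hnv, hmin⟩
    refine ⟨⟨ustar, hu, rfl⟩, by rw [vnorm_mulVec U hU]; exact hnu,
      ⟨vstar, hv, rfl⟩, by rw [vnorm_mulVec V hV]; exact hnv, ?_⟩
    rintro x ⟨u', hu', rfl⟩ y ⟨v', hv', rfl⟩ hnx hny
    rw [Matrix.one_mulVec, Matrix.one_mulVec, key, key]
    refine mul_le_mul_of_nonneg_left ?_ hc.le
    exact hmin u' hu' v' hv' (by rw [← vnorm_mulVec U hU]; exact hnx)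
      (by rw [← vnorm_mulVec V hV]; exact hny)
  · rintro ⟨⟨u1, hu1, hux⟩, hnx, ⟨v1, hv1, hvy⟩, hny, hmin⟩
    have hu : ustar ∈ P := by rw [mulVec_inj' U hU hux]; exact hu1
    have hv : vstar ∈ Q := by rw [mulVec_inj' V hV hvy]; exact hv1
    refine ⟨hu, by rw [← vnorm_mulVec U hU]; exact hnx,
      hv, by rw [← vnorm_mulVec V hV]; exact hny, ?_⟩
    intro u' hu' v' hv' hn1 hn2
    have := hmin (U.mulVec u') ⟨u', hu', rfl⟩ (V.mulVec v') ⟨v', hv', rfl⟩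
      (by rw [vnorm_mulVec U hU]; exact hn1) (by rw [vnorm_mulVec V hV]; exact hn2)
    rw [Matrix.one_mulVec, Matrix.one_mulVec, key, key] at this
    exact le_of_mul_le_mul_left this hc
end

section
/- Let A ∈ ℝ^{m×n}, and let P, Q be the polyhedral cones generated by the matrices G ∈ ℝ^{m×p} and H ∈ ℝ^{n×q} with unit-norm columns. If every entry of Gᵀ A H is strictly positive, then every Nash pair (u,v) of SV(A,P,Q) satisfies u = g_i and v = h_j for some columns g_i of G and h_j of H. -/
open Matrix

/-- The polyhedral cone generated by the columns of `G`. -/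
def coneOf {m p : ℕ} (G : Matrix (Fin m) (Fin p) ℝ) : Set (Fin m → ℝ) :=
  {u | ∃ x : Fin p → ℝ, (∀ i, 0 ≤ x i) ∧ u = G.mulVec x}

/-- `(u,v)` is a Nash pair of the problem `SV(A,P,Q)`: a feasible pair such that `u`
minimizes `⟨·, Av⟩` over unit vectors of `P` and `v` minimizes `⟨u, A·⟩` over unit
vectors of `Q`. -/
def IsNashSV {m n : ℕ} (A : Matrix (Fin m) (Fin n) ℝ) (P : Set (Fin m → ℝ))
    (Q : Set (Fin n → ℝ)) (u : Fin m → ℝ) (v : Fin n → ℝ) : Prop :=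
  u ∈ P ∧ vnorm u = 1 ∧ v ∈ Q ∧ vnorm v = 1 ∧
    (∀ u' ∈ P, vnorm u' = 1 → u ⬝ᵥ A.mulVec v ≤ u' ⬝ᵥ A.mulVec v) ∧
    (∀ v' ∈ Q, vnorm v' = 1 → u ⬝ᵥ A.mulVec v ≤ u ⬝ᵥ A.mulVec v')

lemma sum_dot_left {m p : ℕ} (G : Matrix (Fin m) (Fin p) ℝ) (x : Fin p → ℝ) (w : Fin m → ℝ) :
    G.mulVec x ⬝ᵥ w = ∑ i, x i * ((fun k => G k i) ⬝ᵥ w) := by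
  simp only [dotProduct, mulVec, Finset.sum_mul, Finset.mul_sum]
  rw [Finset.sum_comm]
  exact Finset.sum_congr rfl fun i _ => Finset.sum_congr rfl fun k _ => by ring

lemma sum_dot_right {n q : ℕ} (w : Fin n → ℝ) (M : Matrix (Fin n) (Fin q) ℝ) (y : Fin q → ℝ) :
    w ⬝ᵥ M.mulVec y = ∑ j, y j * (w ⬝ᵥ fun k => M k j) := by
  simp only [dotProduct, mulVec, Finset.mul_sum]
  rw [Finset.sum_comm]
  exact Finset.sum_congr rfl fun i _ => Finset.sum_congr rfl fun k _ => by ring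

lemma colG_dot_AH {m n p q : ℕ} (G : Matrix (Fin m) (Fin p) ℝ) (A : Matrix (Fin m) (Fin n) ℝ)
    (H : Matrix (Fin n) (Fin q) ℝ) (i : Fin p) (j : Fin q) :
    (fun k => G k i) ⬝ᵥ (fun k => (A*H) k j) = (Gᵀ*A*H) i j := by
  simp only [dotProduct, Matrix.mul_apply, Matrix.transpose_apply, Finset.mul_sum,
    Finset.sum_mul]
  rw [Finset.sum_comm]
  exact Finset.sum_congr rfl fun i _ => Finset.sum_congr rfl fun k _ => by ring

lemma col_eq_mulVec_single {m p : ℕ} (G : Matrix (Fin m) (Fin p) ℝ) (i : Fin p) :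
    G.mulVec (Pi.single i 1) = fun k => G k i := by
  funext k
  simp [mulVec, dotProduct, Pi.single_apply]

lemma col_mem_coneOf {m p : ℕ} (G : Matrix (Fin m) (Fin p) ℝ) (i : Fin p) :
    (fun k => G k i) ∈ coneOf G :=
  ⟨Pi.single i 1, fun j => by simp [Pi.single_apply]; split <;> norm_num,
    (col_eq_mulVec_single G i).symm⟩

lemma mulVec_col {m n q : ℕ} (A : Matrix (Fin m) (Fin n) ℝ) (H : Matrix (Fin n) (Fin q) ℝ)
    (j : Fin q) : A.mulVec (fun k => H k j) = fun k => (A*H) k j := by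
  funext k
  simp [mulVec, dotProduct, Matrix.mul_apply]

lemma vnorm_one {n : ℕ} {v : Fin n → ℝ} (h : vnorm v = 1) : v ⬝ᵥ v = 1 :=
  Real.sqrt_eq_one.mp h

lemma dot_le_one {n : ℕ} {g u : Fin n → ℝ} (hg : g ⬝ᵥ g = 1) (hu : u ⬝ᵥ u = 1) :
    g ⬝ᵥ u ≤ 1 := by
  have h0 : 0 ≤ (g - u) ⬝ᵥ (g - u) :=
    Finset.sum_nonneg fun i _ => mul_self_nonneg _
  have hc : u ⬝ᵥ g = g ⬝ᵥ u := dotProduct_comm _ _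
  simp only [sub_dotProduct, dotProduct_sub] at h0
  linarith

lemma eq_of_dot_eq_one {n : ℕ} {g u : Fin n → ℝ} (hg : g ⬝ᵥ g = 1) (hu : u ⬝ᵥ u = 1)
    (hgu : g ⬝ᵥ u = 1) : u = g := by
  have hc : u ⬝ᵥ g = g ⬝ᵥ u := dotProduct_comm _ _
  have h0 : (g - u) ⬝ᵥ (g - u) = 0 := by
    simp only [sub_dotProduct, dotProduct_sub]; linarith
  have := (dotProduct_self_eq_zero).mp h0
  exact (sub_eq_zero.mp this).symm

lemma core {p : ℕ} (x c gu : Fin p → ℝ) (hx : ∀ i, 0 ≤ x i) (hc : ∀ i, 0 < c i)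
    (hgu : ∀ i, gu i ≤ 1)
    (ht : ∀ i, (∑ k, x k * c k) ≤ c i)
    (hdot : ∑ i, x i * gu i = 1) :
    ∃ i, 0 < x i ∧ gu i = 1 := by
  set s := ∑ i, x i with hs
  have hs1 : 1 ≤ s := by
    rw [← hdot]
    exact Finset.sum_le_sum fun i _ => by
      calc x i * gu i ≤ x i * 1 := mul_le_mul_of_nonneg_left (hgu i) (hx i)
      _ = x i := mul_one _
  obtain ⟨i0, hi0⟩ : ∃ i, 0 < x i := by
    by_contra h
    push_neg at h
    have : s ≤ 0 := Finset.sum_nonpos fun i _ => h i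
    linarith
  set t := ∑ k, x k * c k with htdef
  have htpos : 0 < t := by
    apply Finset.sum_pos' (fun i _ => mul_nonneg (hx i) (hc i).le)
    exact ⟨i0, Finset.mem_univ _, mul_pos hi0 (hc i0)⟩
  have hts : s * t ≤ t := by
    calc s * t = ∑ k, x k * t := by rw [hs, Finset.sum_mul]
    _ ≤ ∑ k, x k * c k := Finset.sum_le_sum fun k _ =>
        mul_le_mul_of_nonneg_left (ht k) (hx k)
    _ = t := rfl
  have hsle : s ≤ 1 := by nlinarith
  have hseq : s = 1 := le_antisymm hsle hs1
  have hzero : ∑ i, x i * (1 - gu i) = 0 := by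
    have h2 : ∑ i, x i * (1 - gu i) = s - ∑ i, x i * gu i := by
      rw [hs, ← Finset.sum_sub_distrib]
      exact Finset.sum_congr rfl fun i _ => by ring
    rw [h2, hdot, hseq]; ring
  have hall := (Finset.sum_eq_zero_iff_of_nonneg
    (fun i _ => mul_nonneg (hx i) (by linarith [hgu i]))).mp hzero
  refine ⟨i0, hi0, ?_⟩
  have := hall i0 (Finset.mem_univ _)
  rcases mul_eq_zero.mp this with h | h
  · exact absurd h (ne_of_gt hi0)
  · linarith

/-- If every entry of `Gᵀ A H` is strictly positive, then every Nash pair of `SV(A,P,Q)`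
is a pair of generator columns of `G` and `H`. -/
theorem stmt4 {m n p q : ℕ}
    (A : Matrix (Fin m) (Fin n) ℝ)
    (G : Matrix (Fin m) (Fin p) ℝ) (H : Matrix (Fin n) (Fin q) ℝ)
    (hG : ∀ j, vnorm (fun i => G i j) = 1) (hH : ∀ j, vnorm (fun i => H i j) = 1)
    (hpos : ∀ i j, 0 < (Gᵀ * A * H) i j) :
    ∀ u v, IsNashSV A (coneOf G) (coneOf H) u v →
      ∃ (i : Fin p) (j : Fin q), u = (fun k => G k i) ∧ v = (fun k => H k j) := by
  rintro u v ⟨⟨x, hx, hux⟩, hun, ⟨y, hy, hvy⟩, hvn, hNu, hNv⟩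
  have huu : u ⬝ᵥ u = 1 := vnorm_one hun
  have hvv : v ⬝ᵥ v = 1 := vnorm_one hvn
  have hGc : ∀ i, (fun k => G k i) ⬝ᵥ (fun k => G k i) = 1 := fun i => vnorm_one (hG i)
  have hHc : ∀ j, (fun k => H k j) ⬝ᵥ (fun k => H k j) = 1 := fun j => vnorm_one (hH j)
  -- positive coordinates exist
  have hxex : ∃ i, 0 < x i := by
    by_contra h
    push_neg at h
    have hx0 : x = 0 := funext fun i => le_antisymm (h i) (hx i)
    rw [hx0, mulVec_zero] at hux
    rw [hux] at huu
    simp at huu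
  have hyex : ∃ j, 0 < y j := by
    by_contra h
    push_neg at h
    have hy0 : y = 0 := funext fun j => le_antisymm (h j) (hy j)
    rw [hy0, mulVec_zero] at hvy
    rw [hvy] at hvv
    simp at hvv
  -- column values
  have hcv : ∀ i, (fun k => G k i) ⬝ᵥ A.mulVec v = ∑ j, y j * (Gᵀ*A*H) i j := by
    intro i
    rw [hvy, mulVec_mulVec, sum_dot_right]
    exact Finset.sum_congr rfl fun j _ => by rw [colG_dot_AH]
  have hcpos : ∀ i, 0 < (fun k => G k i) ⬝ᵥ A.mulVec v := by
    intro i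
    rw [hcv i]
    apply Finset.sum_pos' (fun j _ => mul_nonneg (hy j) (hpos i j).le)
    obtain ⟨j0, hj0⟩ := hyex
    exact ⟨j0, Finset.mem_univ _, mul_pos hj0 (hpos i j0)⟩
  have hdv : ∀ j, u ⬝ᵥ A.mulVec (fun k => H k j) = ∑ i, x i * (Gᵀ*A*H) i j := by
    intro j
    rw [hux, sum_dot_left]
    exact Finset.sum_congr rfl fun i _ => by rw [mulVec_col, colG_dot_AH]
  have hdpos : ∀ j, 0 < u ⬝ᵥ A.mulVec (fun k => H k j) := by
    intro j
    rw [hdv j]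
    apply Finset.sum_pos' (fun i _ => mul_nonneg (hx i) (hpos i j).le)
    obtain ⟨i0, hi0⟩ := hxex
    exact ⟨i0, Finset.mem_univ _, mul_pos hi0 (hpos i0 j)⟩
  -- the value t expands both ways
  have htu : u ⬝ᵥ A.mulVec v = ∑ i, x i * ((fun k => G k i) ⬝ᵥ A.mulVec v) := by
    rw [hux, sum_dot_left]
  have htv : u ⬝ᵥ A.mulVec v = ∑ j, y j * (u ⬝ᵥ A.mulVec (fun k => H k j)) := by
    rw [hvy, mulVec_mulVec, sum_dot_right]
    exact Finset.sum_congr rfl fun j _ => by rw [mulVec_col]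
  -- apply the core lemma to u
  obtain ⟨i, hxi, hgui⟩ := core x (fun i => (fun k => G k i) ⬝ᵥ A.mulVec v)
    (fun i => (fun k => G k i) ⬝ᵥ u) hx hcpos
    (fun i => dot_le_one (hGc i) huu)
    (fun i => by
      rw [← htu]
      exact hNu _ (col_mem_coneOf G i) (hG i))
    (by rw [← sum_dot_left, ← hux]; exact huu)
  obtain ⟨j, hyj, hguj⟩ := core y (fun j => u ⬝ᵥ A.mulVec (fun k => H k j))
    (fun j => (fun k => H k j) ⬝ᵥ v) hy hdpos
    (fun j => dot_le_one (hHc j) hvv)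
    (fun j => by
      rw [← htv]
      exact hNv _ (col_mem_coneOf H j) (hH j))
    (by rw [← sum_dot_left, ← hvy]; exact hvv)
  exact ⟨i, j, eq_of_dot_eq_one (hGc i) huu hgui, eq_of_dot_eq_one (hHc j) hvv hguj⟩
end

section
/- Let A ∈ ℝ^{m×n}, let Ḡ ∈ ℝ^{m×k} and H̄ ∈ ℝ^{n×ℓ} be full-column-rank matrices, set A_x = H̄⁺AᵀḠ and A_y = Ḡ⁺AH̄, and let U_G and U_H be matrices whose columns are orthonormal bases of the column spaces of Ḡ and H̄ respectively. Then the spectral radius of A_y A_x satisfies ρ(A_y A_x) = ‖U_Gᵀ A U_H‖², where ‖·‖ is the spectral norm. -/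
/-!
Since the columns of `U_G` span the column space of `Ḡ`, we have `Ḡ = U_G R` with
`R = U_Gᵀ Ḡ` invertible (it has full rank), hence `Ḡ⁺ = R⁻¹ U_Gᵀ`; likewise `H̄ = U_H S` and
`H̄⁺ = S⁻¹ U_Hᵀ`. Therefore `A_y A_x = R⁻¹ (B Bᵀ) R` with `B = U_Gᵀ A U_H`, and similar matrices
have the same spectrum, so `ρ(A_y A_x) = ρ(B Bᵀ)`. Over `ℂ`, `B Bᵀ` is the self-adjoint element
`B Bᴴ` of the C⋆-algebra of complex matrices, whose spectral radius is its norm `‖B‖²`; the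
operator norm of a real matrix does not change under complexification, since
`‖B (x + i y)‖² = ‖B x‖² + ‖B y‖²`.
-/

open Matrix

/-- Pseudoinverse of a full-column-rank matrix: `N⁺ = (NᵀN)⁻¹Nᵀ`. -/
noncomputable def pinv {α β : Type*} [Fintype α] [Fintype β] [DecidableEq β]
    (N : Matrix α β ℝ) : Matrix β α ℝ :=
  (Nᵀ * N)⁻¹ * Nᵀ

/-- Spectral radius of a real square matrix: the largest modulus of its (complex)
eigenvalues. -/
noncomputable def specRad {α : Type*} [Fintype α] [DecidableEq α]
    (C : Matrix α α ℝ) : ℝ :=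
  sSup {r : ℝ | ∃ μ : ℂ, μ ∈ spectrum ℂ (C.map Complex.ofReal) ∧ r = ‖μ‖}

open WithLp
open scoped Matrix.Norms.L2Operator

section EuclideanSpace
variable {ι : Type*} [Fintype ι]

theorem EuclideanSpace.norm_toLp_sq_eq_re_add_im (v : ι → ℂ) :
    ‖toLp 2 v‖ ^ 2 = ‖toLp 2 (fun i => (v i).re)‖ ^ 2 + ‖toLp 2 (fun i => (v i).im)‖ ^ 2 := by
  simp only [EuclideanSpace.norm_sq_eq, ← Finset.sum_add_distrib]
  congr with i
  simp [Complex.sq_norm, Complex.normSq_apply]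
  ring

theorem EuclideanSpace.norm_toLp_ofReal (v : ι → ℝ) :
    ‖toLp 2 (fun i => (v i : ℂ))‖ = ‖toLp 2 v‖ := by
  simp [EuclideanSpace.norm_eq]

end EuclideanSpace

theorem vnorm_eq_norm_toLp {q : ℕ} (v : Fin q → ℝ) : vnorm v = ‖toLp 2 v‖ := by
  rw [vnorm, norm_eq_sqrt_real_inner, EuclideanSpace.inner_toLp_toLp, star_trivial]

theorem specNorm_eq_l2_opNorm {p q : ℕ} (B : Matrix (Fin p) (Fin q) ℝ) : specNorm B = ‖B‖ := by
  rw [l2_opNorm_def, ← ContinuousLinearMap.sSup_unitClosedBall_eq_norm, specNorm]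
  congr 1
  ext r
  constructor
  · rintro ⟨v, hv, rfl⟩
    exact ⟨toLp 2 v, by simpa [vnorm_eq_norm_toLp] using hv, by simp [vnorm_eq_norm_toLp]⟩
  · rintro ⟨x, hx, rfl⟩
    exact ⟨ofLp x, by simpa [vnorm_eq_norm_toLp] using hx,
      by simp [vnorm_eq_norm_toLp, toLpLin_apply]⟩

namespace Matrix

section Complexification
variable {m n : Type*} [Fintype n]

theorem re_map_ofReal_mulVec (B : Matrix m n ℝ) (v : n → ℂ) (i : m) :
    ((B.map Complex.ofReal *ᵥ v) i).re = (B *ᵥ fun j => (v j).re) i := by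
  simp [mulVec, dotProduct, Complex.re_sum]

theorem im_map_ofReal_mulVec (B : Matrix m n ℝ) (v : n → ℂ) (i : m) :
    ((B.map Complex.ofReal *ᵥ v) i).im = (B *ᵥ fun j => (v j).im) i := by
  simp [mulVec, dotProduct, Complex.im_sum]

theorem map_ofReal_mulVec_ofReal (B : Matrix m n ℝ) (v : n → ℝ) :
    B.map Complex.ofReal *ᵥ (fun j => (v j : ℂ)) = fun i => ((B *ᵥ v) i : ℂ) := by
  ext i
  simp [mulVec, dotProduct]

theorem norm_toLp_mulVec_le [Fintype m] [DecidableEq n] {𝕜 : Type*} [RCLike 𝕜]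
    (A : Matrix m n 𝕜) (v : n → 𝕜) :
    ‖toLp 2 (A *ᵥ v)‖ ≤ ‖A‖ * ‖toLp 2 v‖ :=
  A.l2_opNorm_mulVec (toLp 2 v)

theorem l2_opNorm_map_ofReal [Fintype m] [DecidableEq n] (B : Matrix m n ℝ) :
    ‖B.map Complex.ofReal‖ = ‖B‖ := by
  refine le_antisymm ?_ ?_
  · rw [l2_opNorm_def]
    refine ContinuousLinearMap.opNorm_le_bound _ (norm_nonneg B) fun z => ?_
    have hx := B.norm_toLp_mulVec_le fun j => (z j).re
    have hy := B.norm_toLp_mulVec_le fun j => (z j).im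
    rw [← sq_le_sq₀ (norm_nonneg _) (by positivity), ← toLp_ofLp 2 z]
    simp only [LinearEquiv.trans_apply, LinearMap.coe_toContinuousLinearMap', toLpLin_apply,
      EuclideanSpace.norm_toLp_sq_eq_re_add_im, re_map_ofReal_mulVec, im_map_ofReal_mulVec,
      mul_pow]
    calc _ ≤ (‖B‖ * ‖toLp 2 fun j => (z j).re‖) ^ 2 + (‖B‖ * ‖toLp 2 fun j => (z j).im‖) ^ 2 := by
          gcongr
      _ = _ := by ring
  · rw [l2_opNorm_def (A := B)]
    refine ContinuousLinearMap.opNorm_le_bound _ (norm_nonneg _) fun x => ?_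
    have := (B.map Complex.ofReal).norm_toLp_mulVec_le fun j => (x j : ℂ)
    rwa [map_ofReal_mulVec_ofReal, EuclideanSpace.norm_toLp_ofReal,
      EuclideanSpace.norm_toLp_ofReal, toLp_ofLp] at this

end Complexification

section ColumnSpace
variable {m κ K : Type*} [Fintype m] [Fintype κ] [DecidableEq κ] [Field K]

theorem isUnit_of_rank_eq_card {R : Matrix κ κ K} (h : R.rank = Fintype.card κ) : IsUnit R := by
  rw [← mulVec_surjective_iff_isUnit]
  have : LinearMap.range R.mulVecLin = ⊤ :=
    Submodule.eq_top_of_finrank_eq (by rw [Module.finrank_fintype_fun_eq_card]; exact h)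
  exact LinearMap.range_eq_top.mp this

theorem mul_transpose_mul_eq_of_range_le {U G : Matrix m κ K} (hU : Uᵀ * U = 1)
    (h : LinearMap.range G.mulVecLin ≤ LinearMap.range U.mulVecLin) : U * (Uᵀ * G) = G := by
  refine ext_iff_mulVec.mpr fun v => ?_
  obtain ⟨w, hw⟩ := h ⟨v, rfl⟩
  simp only [mulVecLin_apply] at hw
  rw [← mulVec_mulVec, ← mulVec_mulVec, ← hw, mulVec_mulVec w, hU, one_mulVec]

theorem exists_isUnit_eq_mul_of_range_le {U G : Matrix m κ K} (hG : G.rank = Fintype.card κ)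
    (hU : Uᵀ * U = 1) (h : LinearMap.range G.mulVecLin ≤ LinearMap.range U.mulVecLin) :
    ∃ R : Matrix κ κ K, IsUnit R ∧ G = U * R := by
  have hfac := mul_transpose_mul_eq_of_range_le hU h
  refine ⟨Uᵀ * G, isUnit_of_rank_eq_card (le_antisymm (rank_le_card_width _) ?_), hfac.symm⟩
  calc Fintype.card κ = (U * (Uᵀ * G)).rank := by rw [hfac, hG]
    _ ≤ (Uᵀ * G).rank := rank_mul_le_right _ _

end ColumnSpace

end Matrix

theorem pinv_mul_of_isUnit {m κ : Type*} [Fintype m] [Fintype κ] [DecidableEq κ]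
    {U : Matrix m κ ℝ} {R : Matrix κ κ ℝ} (hU : Uᵀ * U = 1) (hR : IsUnit R) :
    pinv (U * R) = R⁻¹ * Uᵀ := by
  have hRt : IsUnit Rᵀ.det := by rwa [det_transpose, ← isUnit_iff_isUnit_det]
  rw [pinv, transpose_mul, Matrix.mul_assoc, ← Matrix.mul_assoc Uᵀ, hU, Matrix.one_mul,
    Matrix.mul_inv_rev, Matrix.mul_assoc, ← Matrix.mul_assoc Rᵀ⁻¹, nonsing_inv_mul _ hRt,
    Matrix.one_mul]

theorem sSup_norm_spectrum_eq_toReal_spectralRadius {A : Type*} [NormedRing A]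
    [NormedAlgebra ℂ A] [CompleteSpace A] (a : A) :
    sSup {r : ℝ | ∃ μ ∈ spectrum ℂ a, r = ‖μ‖} = (spectralRadius ℂ a).toReal := by
  rcases (spectrum ℂ a).eq_empty_or_nonempty with h | h
  · simp [h, spectralRadius]
  obtain ⟨μ₀, hμ₀, hmax⟩ := spectrum.exists_nnnorm_eq_spectralRadius_of_nonempty h
  rw [← hmax]
  refine IsGreatest.csSup_eq ⟨⟨μ₀, hμ₀, rfl⟩, ?_⟩
  rintro r ⟨μ, hμ, rfl⟩
  have hle : (‖μ‖₊ : ENNReal) ≤ ‖μ₀‖₊ := hmax ▸ le_iSup₂ (α := ENNReal) μ hμ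
  simpa using NNReal.coe_le_coe.mpr (ENNReal.coe_le_coe.mp hle)

section SpecRad
variable {α : Type*} [Fintype α] [DecidableEq α]

theorem specRad_inv_mul_mul (M : Matrix α α ℝ) {P : Matrix α α ℝ} (hP : IsUnit P) :
    specRad (P⁻¹ * M * P) = specRad M := by
  obtain ⟨u, rfl⟩ := hP
  let v := Units.map (Complex.ofRealHom.mapMatrix : Matrix α α ℝ →+* Matrix α α ℂ).toMonoidHom u
  have hconj : ((u : Matrix α α ℝ)⁻¹ * M * u).map Complex.ofReal
      = (↑v⁻¹ : Matrix α α ℂ) * M.map Complex.ofReal * (v : Matrix α α ℂ) := by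
    change Complex.ofRealHom.mapMatrix _ = _
    rw [← coe_units_inv, map_mul, map_mul]
    rfl
  unfold specRad
  rw [hconj, spectrum.units_conjugate']

theorem specRad_mul_transpose_self {β : Type*} [Fintype β] [DecidableEq β] (B : Matrix α β ℝ) :
    specRad (B * Bᵀ) = ‖B‖ ^ 2 := by
  set Bc := B.map Complex.ofReal
  have hmap : (B * Bᵀ).map Complex.ofReal = Bc * Bcᴴ := by
    change (B * Bᵀ).map Complex.ofRealHom = _
    rw [Matrix.map_mul]
    congr 1
    ext i j
    simp [Bc]
  rw [specRad, hmap, sSup_norm_spectrum_eq_toReal_spectralRadius,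
    (isHermitian_mul_conjTranspose_self Bc).isSelfAdjoint.spectralRadius_eq_nnnorm]
  have := l2_opNorm_conjTranspose_mul_self Bcᴴ
  rw [conjTranspose_conjTranspose, l2_opNorm_conjTranspose] at this
  simp [this, Bc, l2_opNorm_map_ofReal, sq]

end SpecRad

/-- With `A_x = H̄⁺AᵀḠ`, `A_y = Ḡ⁺AH̄` for full-column-rank `Ḡ`, `H̄`, and `U_G`, `U_H`
orthonormal bases of the column spaces of `Ḡ`, `H̄`, one has
`ρ(A_y A_x) = ‖U_Gᵀ A U_H‖²`. -/
theorem stmt11 {m n k l : ℕ} (A : Matrix (Fin m) (Fin n) ℝ)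
    (Gb : Matrix (Fin m) (Fin k) ℝ) (Hb : Matrix (Fin n) (Fin l) ℝ)
    (hGrank : Gb.rank = k) (hHrank : Hb.rank = l)
    (UG : Matrix (Fin m) (Fin k) ℝ) (UH : Matrix (Fin n) (Fin l) ℝ)
    (hUGo : UGᵀ * UG = 1) (hUHo : UHᵀ * UH = 1)
    (hUGspan : LinearMap.range UG.mulVecLin = LinearMap.range Gb.mulVecLin)
    (hUHspan : LinearMap.range UH.mulVecLin = LinearMap.range Hb.mulVecLin) :
    specRad (pinv Gb * A * Hb * (pinv Hb * Aᵀ * Gb)) = specNorm (UGᵀ * A * UH) ^ 2 := by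
  obtain ⟨R, hR, rfl⟩ := exists_isUnit_eq_mul_of_range_le (by simpa using hGrank) hUGo hUGspan.ge
  obtain ⟨S, hS, rfl⟩ := exists_isUnit_eq_mul_of_range_le (by simpa using hHrank) hUHo hUHspan.ge
  have hSS : S * S⁻¹ = 1 := mul_nonsing_inv S ((isUnit_iff_isUnit_det S).mp hS)
  have hsimilar : pinv (UG * R) * A * (UH * S) * (pinv (UH * S) * Aᵀ * (UG * R))
      = R⁻¹ * (UGᵀ * A * UH * (UGᵀ * A * UH)ᵀ) * R := by
    simp only [pinv_mul_of_isUnit hUGo hR, pinv_mul_of_isUnit hUHo hS, transpose_mul,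
      transpose_transpose, Matrix.mul_assoc]
    rw [← Matrix.mul_assoc S S⁻¹, hSS, Matrix.one_mul]
  rw [hsimilar, specRad_inv_mul_mul _ hR, specRad_mul_transpose_self, specNorm_eq_l2_opNorm]
end
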